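/- Uniform L² centering bound: there exists a finite constant C, depending only on α, such that for every m ≥ 1 the crowding in-degree process satisfies ∑_{r=0}^{m} P m r · (r − x_m)² ≤ C. -/

import Mathlib

open Finset Filter

/-- The crowding in-degree process: `P q m r` is the probability of having
accepted `r` edges after `m` proposals, with acceptance probability `q^r`. -/
noncomputable def crowdP (q : ℝ) : ℕ → ℕ → ℝ
  | 0, r => if r = 0 then 1 else 0
  | m + 1, r =>
      crowdP q m r * (1 - q ^ r) +
        (if r = 0 then 0 else crowdP q m (r - 1) * q ^ (r - 1))

/-- Generating function `G m z = ∑_{r=0}^m P m r · z^r`. -/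
noncomputable def crowdG (q : ℝ) (m : ℕ) (z : ℝ) : ℝ :=
  ∑ r ∈ Finset.range (m + 1), crowdP q m r * z ^ r

/-- Centering sequence `x_m = (1/α)·log(1 + (e^α − 1)·m)`. -/
noncomputable def crowdX (α : ℝ) (m : ℕ) : ℝ :=
  (1 / α) * Real.log (1 + (Real.exp α - 1) * m)

/-- Mean `μ_m = ∑_{r=0}^m r · P m r`. -/
noncomputable def crowdMu (q : ℝ) (m : ℕ) : ℝ :=
  ∑ r ∈ Finset.range (m + 1), (r : ℝ) * crowdP q m r

lemma crowdP_nonneg {q : ℝ} (hq0 : 0 ≤ q) (hq1 : q ≤ 1) : ∀ m r, 0 ≤ crowdP q m r := by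
  intro m
  induction m with
  | zero => intro r; simp only [crowdP]; split <;> norm_num
  | succ m ih =>
    intro r
    simp only [crowdP]
    have h1 : q ^ r ≤ 1 := pow_le_one₀ hq0 hq1
    have h2 : 0 ≤ q ^ r := pow_nonneg hq0 r
    have h3 := ih r
    split
    · nlinarith
    · have h4 := ih (r - 1)
      have h5 : (0:ℝ) ≤ q ^ (r-1) := pow_nonneg hq0 _
      nlinarith

lemma crowdP_eq_zero {q : ℝ} : ∀ m r, m < r → crowdP q m r = 0 := by
  intro m
  induction m with
  | zero =>
    intro r hr
    simp only [crowdP]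
    rw [if_neg (by omega)]
  | succ m ih =>
    intro r hr
    simp only [crowdP]
    rw [ih r (by omega), if_neg (by omega), ih (r-1) (by omega)]
    ring

lemma crowdG_nonneg {q : ℝ} (hq0 : 0 ≤ q) (hq1 : q ≤ 1) (m : ℕ) {z : ℝ} (hz : 0 ≤ z) :
    0 ≤ crowdG q m z :=
  Finset.sum_nonneg fun r _ =>
    mul_nonneg (crowdP_nonneg hq0 hq1 m r) (pow_nonneg hz r)

lemma crowdG_rec {q : ℝ} (m : ℕ) (z : ℝ) :
    crowdG q (m+1) z = crowdG q m z + (z - 1) * crowdG q m (q * z) := by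
  unfold crowdG
  simp only [crowdP, add_mul]
  rw [Finset.sum_add_distrib]
  have h1 : ∑ r ∈ Finset.range (m+2), crowdP q m r * (1 - q ^ r) * z ^ r
      = (∑ r ∈ Finset.range (m+1), crowdP q m r * z ^ r)
        - ∑ r ∈ Finset.range (m+1), crowdP q m r * (q*z) ^ r := by
    rw [Finset.sum_range_succ, crowdP_eq_zero m (m+1) (by omega), zero_mul, zero_mul, add_zero,
      ← Finset.sum_sub_distrib]
    exact Finset.sum_congr rfl fun r _ => by rw [mul_pow]; ring
  have h2 : ∑ r ∈ Finset.range (m+2),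
        (if r = 0 then 0 else crowdP q m (r - 1) * q ^ (r - 1)) * z ^ r
      = z * ∑ r ∈ Finset.range (m+1), crowdP q m r * (q*z) ^ r := by
    rw [Finset.sum_range_succ', Finset.mul_sum]
    have : (if (0:ℕ) = 0 then (0:ℝ) else crowdP q m (0 - 1) * q ^ (0 - 1)) * z ^ 0 = 0 := by
      simp
    rw [this, add_zero]
    refine Finset.sum_congr rfl fun r _ => ?_
    rw [if_neg (Nat.succ_ne_zero r), Nat.add_sub_cancel, mul_pow]
    ring
  rw [h1, h2]
  ring

lemma crowdG_zero_eq (q z : ℝ) : crowdG q 0 z = 1 := by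
  simp [crowdG, crowdP]

lemma crowdG_one (q : ℝ) (m : ℕ) : crowdG q m 1 = 1 := by
  induction m with
  | zero => exact crowdG_zero_eq q 1
  | succ m ih => rw [crowdG_rec, ih]; ring

lemma crowdP_sum (q : ℝ) (m : ℕ) : ∑ r ∈ Finset.range (m+1), crowdP q m r = 1 := by
  have h := crowdG_one q m
  unfold crowdG at h
  simpa using h

lemma crowdG_inv (q : ℝ) (hq : q ≠ 0) (m : ℕ) :
    crowdG q m (1/q) = 1 + (1/q - 1) * m := by
  induction m with
  | zero => simp [crowdG_zero_eq]
  | succ m ih =>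
    rw [crowdG_rec, mul_one_div, div_self hq, crowdG_one, ih]
    push_cast
    ring

lemma crowdG_sq_le {q : ℝ} (hq0 : 0 ≤ q) (hq1 : q ≤ 1) (m : ℕ) :
    crowdG q m q ^ 2 ≤ crowdG q m (q^2) := by
  have key := Finset.sum_sq_le_sum_mul_sum_of_sq_eq_mul (Finset.range (m+1))
    (r := fun r => crowdP q m r * q ^ r)
    (f := fun r => crowdP q m r)
    (g := fun r => crowdP q m r * (q^2) ^ r)
    (fun i _ => crowdP_nonneg hq0 hq1 m i)
    (fun i _ => mul_nonneg (crowdP_nonneg hq0 hq1 m i) (pow_nonneg (by positivity) i))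
    (fun i _ => by rw [mul_pow, ← pow_mul, ← pow_mul, Nat.mul_comm]; ring)
  rw [crowdP_sum, one_mul] at key
  exact key

lemma crowd_key_ineq (a c s : ℝ) (ha : 0 ≤ a) (h1 : a * (1+s) ≤ 1) (hc : 0 < c)
    (hc1 : c ≤ 1) (hs : 0 ≤ s) : (a - c * a^2) * (1 + s + c) ≤ 1 := by
  rcases le_or_gt (c*a) 1 with h | h
  · nlinarith [mul_nonneg (sub_nonneg.2 h1) (sub_nonneg.2 h), mul_nonneg hc.le ha]
  · nlinarith [sq_nonneg (c*a - 1), mul_nonneg (mul_nonneg hc.le ha) (sub_nonneg.2 h1),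
      sq_nonneg (c*a)]

lemma crowdG_q_bound {q : ℝ} (hq0 : 0 < q) (hq1 : q < 1) (m : ℕ) :
    crowdG q m q * (1 + (1-q) * m) ≤ 1 := by
  induction m with
  | zero => simp [crowdG_zero_eq]
  | succ m ih =>
    have hGn : 0 ≤ crowdG q m q := crowdG_nonneg hq0.le hq1.le m hq0.le
    have hrec : crowdG q (m+1) q ≤ crowdG q m q - (1-q) * (crowdG q m q)^2 := by
      rw [crowdG_rec]
      have hsq : crowdG q m q ^ 2 ≤ crowdG q m (q*q) := by
        have := crowdG_sq_le hq0.le hq1.le m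
        rwa [show q^2 = q*q by ring] at this
      nlinarith
    have key := crowd_key_ineq (crowdG q m q) (1-q) ((1-q)*m) hGn
      (by rw [show (1:ℝ) + (1-q)*m = 1 + (1-q)*m from rfl]; exact ih)
      (by linarith) (by linarith)
      (mul_nonneg (by linarith) (Nat.cast_nonneg m))
    have hmn : (0:ℝ) ≤ (m:ℝ) := Nat.cast_nonneg m
    calc crowdG q (m+1) q * (1 + (1-q) * ((m+1 : ℕ) : ℝ))
        ≤ (crowdG q m q - (1-q) * (crowdG q m q)^2) * (1 + (1-q)*m + (1-q)) := by
          have h' : (1:ℝ) + (1-q) * ((m+1 : ℕ) : ℝ) = 1 + (1-q)*m + (1-q) := by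
            push_cast; ring
          rw [h']
          exact mul_le_mul_of_nonneg_right hrec (by nlinarith)
      _ ≤ 1 := key

lemma crowd_sq_le_two_exp (t : ℝ) (ht : 0 ≤ t) : t^2 ≤ 2 * Real.exp t := by
  have h3 : Real.exp t = (Real.exp (t/3))^3 := by
    rw [← Real.exp_nat_mul]; congr 1; push_cast; ring
  have h := Real.add_one_le_exp (t/3)
  have hp : (1 + t/3)^3 ≤ (Real.exp (t/3))^3 := by
    apply pow_le_pow_left₀ (by linarith) (by linarith)
  rw [h3]
  nlinarith [mul_nonneg ht (sq_nonneg (t-3))]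

lemma crowd_sq_le_cosh (α u : ℝ) (hα : 0 < α) :
    u^2 ≤ (2/α^2) * (Real.exp (α*u) + Real.exp (-(α*u))) := by
  have e1 := (Real.exp_pos (α*u)).le
  have e2 := (Real.exp_pos (-(α*u))).le
  rcases le_or_gt 0 u with h | h
  · have h' := crowd_sq_le_two_exp (α*u) (by positivity)
    have hh : (α*u)^2 = α^2 * u^2 := by ring
    rw [hh] at h'
    rw [div_mul_eq_mul_div, le_div_iff₀ (by positivity)]
    nlinarith
  · have h' := crowd_sq_le_two_exp (-(α*u)) (by nlinarith)
    have hh : (-(α*u))^2 = α^2 * u^2 := by ring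
    rw [hh] at h'
    rw [div_mul_eq_mul_div, le_div_iff₀ (by positivity)]
    nlinarith

theorem stmt_9 (α : ℝ) (hα : 0 < α) :
    ∃ C : ℝ, ∀ m : ℕ, 1 ≤ m →
      ∑ r ∈ Finset.range (m + 1),
        crowdP (Real.exp (-α)) m r * ((r : ℝ) - crowdX α m) ^ 2 ≤ C := by
  set q : ℝ := Real.exp (-α) with hqdef
  have hq0 : 0 < q := Real.exp_pos _
  have hq1 : q < 1 := by
    rw [hqdef]
    rw [← Real.exp_zero]
    exact Real.exp_lt_exp.2 (by linarith)
  have hE1 : (1:ℝ) < Real.exp α := by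
    rw [← Real.exp_zero]; exact Real.exp_lt_exp.2 hα
  have hqinv : 1/q = Real.exp α := by
    rw [hqdef, Real.exp_neg, one_div, inv_inv]
  refine ⟨(2/α^2) * (1 + Real.exp α / (1 - q)), fun m _ => ?_⟩
  set x : ℝ := crowdX α m with hxdef
  -- exp(α x) = 1 + (e^α - 1) m
  have hY : (0:ℝ) < 1 + (Real.exp α - 1) * m := by
    have : (0:ℝ) ≤ (Real.exp α - 1) * m := by
      apply mul_nonneg (by linarith) (Nat.cast_nonneg m)
    linarith
  have hax : α * x = Real.log (1 + (Real.exp α - 1) * m) := by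
    rw [hxdef, crowdX]
    field_simp
  have hexpx : Real.exp (α * x) = 1 + (Real.exp α - 1) * m := by
    rw [hax, Real.exp_log hY]
  -- pointwise bound
  have hpoint : ∀ r ∈ Finset.range (m+1),
      crowdP q m r * ((r:ℝ) - x)^2 ≤
        (2/α^2) * (crowdP q m r * (1/q)^r * Real.exp (-(α*x))
          + crowdP q m r * q^r * Real.exp (α*x)) := by
    intro r _
    have hP := crowdP_nonneg hq0.le hq1.le m r
    have h1 : Real.exp (α * ((r:ℝ) - x)) = (1/q)^r * Real.exp (-(α*x)) := by
      rw [hqinv, ← Real.exp_nat_mul, ← Real.exp_add]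
      congr 1; ring
    have h2 : Real.exp (-(α * ((r:ℝ) - x))) = q^r * Real.exp (α*x) := by
      rw [hqdef, ← Real.exp_nat_mul, ← Real.exp_add]
      congr 1; ring
    have hc := crowd_sq_le_cosh α ((r:ℝ) - x) hα
    rw [h1, h2] at hc
    calc crowdP q m r * ((r:ℝ) - x)^2
        ≤ crowdP q m r * ((2/α^2) * ((1/q)^r * Real.exp (-(α*x)) + q^r * Real.exp (α*x))) :=
          mul_le_mul_of_nonneg_left hc hP
      _ = (2/α^2) * (crowdP q m r * (1/q)^r * Real.exp (-(α*x))
            + crowdP q m r * q^r * Real.exp (α*x)) := by ring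
  have hsum := Finset.sum_le_sum hpoint
  have hexpand : ∑ r ∈ Finset.range (m+1),
      (2/α^2) * (crowdP q m r * (1/q)^r * Real.exp (-(α*x))
        + crowdP q m r * q^r * Real.exp (α*x))
      = (2/α^2) * (Real.exp (-(α*x)) * crowdG q m (1/q)
          + Real.exp (α*x) * crowdG q m q) := by
    unfold crowdG
    rw [Finset.mul_sum, Finset.mul_sum, ← Finset.sum_add_distrib, Finset.mul_sum]
    exact Finset.sum_congr rfl fun r _ => by ring
  rw [hexpand] at hsum
  refine hsum.trans ?_
  -- first term is 1
  have hfirst : Real.exp (-(α*x)) * crowdG q m (1/q) = 1 := by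
    rw [crowdG_inv q hq0.ne' m, hqinv, ← hexpx, ← Real.exp_add]
    simp
  -- second term bound
  have hGb := crowdG_q_bound hq0 hq1 m
  have hGn : 0 ≤ crowdG q m q := crowdG_nonneg hq0.le hq1.le m hq0.le
  have hsecond : Real.exp (α*x) * crowdG q m q ≤ Real.exp α / (1 - q) := by
    rw [hexpx, le_div_iff₀ (by linarith : (0:ℝ) < 1 - q)]
    have hmn : (0:ℝ) ≤ (m:ℝ) := Nat.cast_nonneg m
    have hEq : Real.exp α * q = 1 := by
      rw [hqdef, ← Real.exp_add]; simp
    nlinarith [mul_nonneg hGn hmn, mul_nonneg (mul_nonneg hGn hmn) (sub_nonneg.2 hq1.le)]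
  have h2pos : (0:ℝ) ≤ 2/α^2 := by positivity
  rw [hfirst]
  exact mul_le_mul_of_nonneg_left (by linarith) h2pos
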